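/- Let q > 0 and define the quasiconvex PAR Ψ : ℝ → ℝ as follows: for x ∈ ℝ, letting k = ⌊|x|/q⌋ ∈ ℕ, set Ψ(x) = |x| − kq/2 if kq ≤ |x| ≤ (2k+1)q/2, and Ψ(x) = (k+1)q/2 if (2k+1)q/2 ≤ |x| ≤ (k+1)q. Fix λ ≥ q, fix x ∈ ℝ, and let Φ(z) = λΨ(z) + (1/2)(z − x)². Then z = sign(x) · q · max(0, round((|x| − λ/2)/q)) is a global minimizer of Φ over ℝ, where round(·) denotes rounding to the nearest integer. In particular, for λ ≥ q the proximal mapping of λΨ maps every input to a point of the quantization grid qℤ. -/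

import Mathlib

/-!
For `t ≥ 0` one has `Ψ(t) = (t + dist(t, qℤ)) / 2`. Completing the square with
`b = |x| − λ/2` turns `λΨ(t) + (t − |x|)²/2` into `((t − b)² + λ·dist(t, qℤ)) / 2` up to a
constant. Since `dist(·, qℤ)` is 1-Lipschitz and `dist(b, qℤ) ≤ q/2 ≤ λ/2`, no `t ≥ 0` beats the
grid point nearest to `b` (clamped at `0`). Evenness of `Ψ` and `(|z| − |x|)² ≤ (z − x)²` reduce
the problem to `t = |z|`.
-/

/-- The quasiconvex piecewise-affine regularizer with uniformly spaced quantization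
values `Q = {0, ±q, ±2q, …}`: with `k = ⌊|x|/q⌋`, it equals `|x| − kq/2` on
`[kq, (2k+1)q/2]` and `(k+1)q/2` on `[(2k+1)q/2, (k+1)q]`. -/
noncomputable def quasiconvexPAR (q : ℝ) (x : ℝ) : ℝ :=
  if |x| ≤ (2 * (⌊|x| / q⌋₊ : ℝ) + 1) * q / 2 then
    |x| - (⌊|x| / q⌋₊ : ℝ) * q / 2
  else
    ((⌊|x| / q⌋₊ : ℝ) + 1) * q / 2

section Round

variable {α : Type*} [Field α] [LinearOrder α] [IsStrictOrderedRing α] [FloorRing α]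

theorem abs_sub_round_le_abs_sub_add (x y : α) : |y - round y| ≤ |y - x| + |x - round x| :=
  calc |y - round y| ≤ |y - round x| := round_le y (round x)
    _ ≤ |y - x| + |x - round x| := abs_sub_le y x _

theorem round_nonpos_of_lt_half {x : α} (hx : x < 1 / 2) : round x ≤ 0 := by
  rw [round_eq, ← Int.lt_add_one_iff, Int.floor_lt]
  push_cast
  linarith

end Round

theorem quasiconvexPAR_eq {q : ℝ} (hq : 0 < q) (z : ℝ) :
    quasiconvexPAR q z = (|z| + q * |(|z| / q) - round (|z| / q)|) / 2 := by
  set y := |z| / q with hy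
  have hz : |z| = y * q := by rw [hy, div_mul_cancel₀ _ hq.ne']
  have hfract : Int.fract y = y - ⌊y⌋₊ := by
    rw [Int.fract, ← Int.natCast_floor_eq_floor (by positivity)]; push_cast; ring
  rw [abs_sub_round_eq_min, hfract, quasiconvexPAR, ← hy, hz]
  split_ifs with h
  · rw [min_eq_left (by nlinarith)]; ring
  · rw [min_eq_right (by nlinarith)]; ring

theorem quasiconvexPAR_abs (q z : ℝ) : quasiconvexPAR q |z| = quasiconvexPAR q z := by
  rw [quasiconvexPAR, quasiconvexPAR, abs_abs]

theorem quasiconvexPAR_neg (q z : ℝ) : quasiconvexPAR q (-z) = quasiconvexPAR q z := by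
  rw [quasiconvexPAR, quasiconvexPAR, abs_neg]

theorem quasiconvexPAR_intCast_mul {q : ℝ} (hq : 0 < q) {n : ℤ} (hn : 0 ≤ n) :
    quasiconvexPAR q (n * q) = n * q / 2 := by
  have hnq : (0 : ℝ) ≤ n * q := mul_nonneg (by exact_mod_cast hn) hq.le
  rw [quasiconvexPAR_eq hq, abs_of_nonneg hnq, mul_div_cancel_right₀ _ hq.ne', round_intCast]
  simp

theorem sq_round_mul_sub_le {q lam : ℝ} (hq : 0 < q) (hlam : q ≤ lam) (b t : ℝ) :
    (round (b / q) * q - b) ^ 2 ≤ (t - b) ^ 2 + lam * (q * |t / q - round (t / q)|) := by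
  set D := q * |b / q - round (b / q)| with hD
  have hD_sq : (round (b / q) * q - b) ^ 2 = D ^ 2 := by
    rw [hD, mul_pow, sq_abs, ← neg_sq]
    field_simp
    ring
  have hD_le : D ≤ q / 2 := by
    have := abs_sub_round (b / q); rw [hD]; nlinarith
  have hlip : D - |t - b| ≤ q * |t / q - round (t / q)| := by
    have := abs_sub_round_le_abs_sub_add (t / q) (b / q)
    rw [← sub_div, abs_div, abs_of_pos hq, abs_sub_comm b t] at this
    have := mul_le_mul_of_nonneg_left this hq.le
    rw [mul_add, mul_div_cancel₀ _ hq.ne'] at this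
    linarith
  have hpen : 0 ≤ lam * (q * |t / q - round (t / q)|) :=
    mul_nonneg (hq.le.trans hlam) (by positivity)
  rw [hD_sq, ← sq_abs (t - b)]
  rcases le_or_gt D |t - b| with h | h
  · nlinarith [show 0 ≤ D by positivity]
  · -- `s² + λ(D − s) − D² = (D − s)(λ − D − s) ≥ 0` for `s = |t − b| < D ≤ q/2 ≤ λ/2`
    nlinarith [abs_nonneg (t - b)]

theorem sq_max_zero_round_mul_sub_le {q lam : ℝ} (hq : 0 < q) (hlam : q ≤ lam) (b : ℝ) {t : ℝ}
    (ht : 0 ≤ t) :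
    ((max 0 (round (b / q)) : ℤ) * q - b) ^ 2
      ≤ (t - b) ^ 2 + lam * (q * |t / q - round (t / q)|) := by
  rcases lt_or_ge (round (b / q)) 0 with h | h
  · have hround : (round (b / q) : ℝ) ≤ -1 := by exact_mod_cast Int.le_sub_one_of_lt h
    have hb : b < 0 :=
      neg_of_div_neg_left (by linarith [sub_half_lt_round (b / q)]) hq.le
    rw [max_eq_left h.le]
    have : 0 ≤ lam * (q * |t / q - round (t / q)|) :=
      mul_nonneg (hq.le.trans hlam) (by positivity)
    nlinarith
  · rw [max_eq_right h]
    exact sq_round_mul_sub_le hq hlam b t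

theorem quasiconvexPAR_objective_round_le {q lam : ℝ} (hq : 0 < q) (hlam : q ≤ lam) (a : ℝ)
    {t : ℝ} (ht : 0 ≤ t) :
    lam * quasiconvexPAR q ((max 0 (round ((a - lam / 2) / q)) : ℤ) * q)
        + 1 / 2 * ((max 0 (round ((a - lam / 2) / q)) : ℤ) * q - a) ^ 2
      ≤ lam * quasiconvexPAR q t + 1 / 2 * (t - a) ^ 2 := by
  rw [quasiconvexPAR_intCast_mul hq (le_max_left _ _), quasiconvexPAR_eq hq, abs_of_nonneg ht]
  linear_combination (1 / 2) * sq_max_zero_round_mul_sub_le hq hlam (a - lam / 2) ht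

theorem prox_quasiconvex_par_large_lambda
    (q : ℝ) (hq : 0 < q) (lam : ℝ) (hlam : q ≤ lam) (x : ℝ)
    (Φ : ℝ → ℝ)
    (hΦ : ∀ z, Φ z = lam * quasiconvexPAR q z + (1 / 2) * (z - x) ^ 2) :
    (∀ z : ℝ,
      Φ (Real.sign x * (q * ((max 0 (round ((|x| - lam / 2) / q)) : ℤ) : ℝ))) ≤ Φ z) ∧
    ∃ m : ℤ,
      Real.sign x * (q * ((max 0 (round ((|x| - lam / 2) / q)) : ℤ) : ℝ)) = (m : ℝ) * q := by
  set n : ℤ := max 0 (round ((|x| - lam / 2) / q))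
  have hΦ_ge : ∀ z, lam * quasiconvexPAR q |z| + 1 / 2 * (|z| - |x|) ^ 2 ≤ Φ z := fun z => by
    have : (|z| - |x|) ^ 2 ≤ (z - x) ^ 2 :=
      sq_le_sq.2 (by simpa using abs_abs_sub_abs_le_abs_sub z x)
    rw [hΦ, quasiconvexPAR_abs]
    linarith
  have hΦ_eq : Φ (Real.sign x * (q * n))
      = lam * quasiconvexPAR q (n * q) + 1 / 2 * (n * q - |x|) ^ 2 := by
    rcases lt_trichotomy x 0 with hx | rfl | hx
    · rw [hΦ, Real.sign_of_neg hx, abs_of_neg hx, show -1 * (q * n) = -(n * q) by ring,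
        quasiconvexPAR_neg]
      ring
    · have hn0 : n = 0 := max_eq_left <| round_nonpos_of_lt_half <|
        (div_neg_of_neg_of_pos (by rw [abs_zero]; linarith) hq).trans (by norm_num)
      simp [hΦ, hn0]
    · rw [hΦ, Real.sign_of_pos hx, abs_of_pos hx, one_mul, mul_comm q]
  refine ⟨fun z => ?_, ?_⟩
  · rw [hΦ_eq]
    exact (quasiconvexPAR_objective_round_le hq hlam |x| (abs_nonneg z)).trans (hΦ_ge z)
  · rcases Real.sign_apply_eq x with hs | hs | hs <;> rw [hs]
    · exact ⟨-n, by push_cast; ring⟩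
    · exact ⟨0, by simp⟩
    · exact ⟨n, by ring⟩
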